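/- Double null form bound: let 𝔪(ξ,η) = (1/2)(ξ·η^⊥)(ξ·(ξ−2η))/(|η|²|ξ−η|²) for η ≠ 0, ξ−η ≠ 0. Then |𝔪(ξ,η)| ≤ (1/2) |ξ−2η|² |ξ| / (|η| |ξ−η|²). In particular 𝔪 vanishes to second order on the set {ξ = 2η}. -/

import Mathlib

noncomputable def perp (x : EuclideanSpace ℝ (Fin 2)) : EuclideanSpace ℝ (Fin 2) :=
  (WithLp.equiv 2 (Fin 2 → ℝ)).symm ![-x 1, x 0]

/-- The symmetrized symbol `𝔪` of the β-plane nonlinearity. -/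
noncomputable def frakm (ξ η : EuclideanSpace ℝ (Fin 2)) : ℝ :=
  (1 / 2) * ((inner ℝ ξ (perp η) : ℝ) * (inner ℝ ξ (ξ - (2 : ℝ) • η) : ℝ)) /
    (‖η‖ ^ 2 * ‖ξ - η‖ ^ 2)

/-!
Since `η ⊥ η^⊥`, the factor `ξ · η^⊥` equals `(ξ - 2η) · η^⊥`, so by Cauchy–Schwarz it is at most
`|ξ - 2η| |η|`; the second factor `ξ · (ξ - 2η)` is at most `|ξ| |ξ - 2η|`. Cancelling one `|η|`
against the denominator gives the bound.
-/

open RealInnerProductSpace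

section Perp

@[simp]
lemma perp_apply_zero (x : EuclideanSpace ℝ (Fin 2)) : perp x 0 = -x 1 := rfl

@[simp]
lemma perp_apply_one (x : EuclideanSpace ℝ (Fin 2)) : perp x 1 = x 0 := rfl

lemma norm_perp (x : EuclideanSpace ℝ (Fin 2)) : ‖perp x‖ = ‖x‖ := by
  simp only [EuclideanSpace.norm_eq, Fin.sum_univ_two, perp_apply_zero, perp_apply_one, norm_neg,
    add_comm]

lemma inner_self_perp (x : EuclideanSpace ℝ (Fin 2)) : ⟪x, perp x⟫ = 0 := by
  simp only [PiLp.inner_apply, Fin.sum_univ_two, perp_apply_zero, perp_apply_one,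
    RCLike.inner_apply, conj_trivial]
  ring

lemma inner_sub_smul_perp (ξ η : EuclideanSpace ℝ (Fin 2)) (c : ℝ) :
    ⟪ξ - c • η, perp η⟫ = ⟪ξ, perp η⟫ := by
  rw [inner_sub_left, real_inner_smul_left, inner_self_perp, mul_zero, sub_zero]

lemma abs_inner_perp_le (ξ η : EuclideanSpace ℝ (Fin 2)) (c : ℝ) :
    |⟪ξ, perp η⟫| ≤ ‖ξ - c • η‖ * ‖η‖ := by
  rw [← inner_sub_smul_perp ξ η c, ← norm_perp η]
  exact abs_real_inner_le_norm _ _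

end Perp

lemma abs_inner_perp_mul_inner_le (ξ η : EuclideanSpace ℝ (Fin 2)) (c : ℝ) :
    |⟪ξ, perp η⟫ * ⟪ξ, ξ - c • η⟫| ≤ ‖ξ - c • η‖ ^ 2 * ‖ξ‖ * ‖η‖ := by
  calc |⟪ξ, perp η⟫ * ⟪ξ, ξ - c • η⟫|
      = |⟪ξ, perp η⟫| * |⟪ξ, ξ - c • η⟫| := abs_mul _ _
    _ ≤ (‖ξ - c • η‖ * ‖η‖) * (‖ξ‖ * ‖ξ - c • η‖) := by
        gcongr
        · exact abs_inner_perp_le ξ η c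
        · exact abs_real_inner_le_norm _ _
    _ = ‖ξ - c • η‖ ^ 2 * ‖ξ‖ * ‖η‖ := by ring

lemma mul_div_sq_mul {K : Type*} [Field K] (a b c : K) : a * b / (b ^ 2 * c) = a / (b * c) := by
  rcases eq_or_ne b 0 with rfl | hb
  · simp
  · rw [sq, mul_assoc, mul_comm a, mul_div_mul_left _ _ hb]

theorem double_null_form_bound_general (ξ η : EuclideanSpace ℝ (Fin 2)) :
    |frakm ξ η| ≤ (1 / 2) * ‖ξ - (2 : ℝ) • η‖ ^ 2 * ‖ξ‖ / (‖η‖ * ‖ξ - η‖ ^ 2) := by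
  calc |frakm ξ η|
      = 1 / 2 * |⟪ξ, perp η⟫ * ⟪ξ, ξ - (2 : ℝ) • η⟫| / (‖η‖ ^ 2 * ‖ξ - η‖ ^ 2) := by
        rw [frakm, abs_div, abs_mul, abs_of_pos one_half_pos,
          abs_of_nonneg (by positivity : (0 : ℝ) ≤ ‖η‖ ^ 2 * ‖ξ - η‖ ^ 2)]
    _ ≤ 1 / 2 * (‖ξ - (2 : ℝ) • η‖ ^ 2 * ‖ξ‖ * ‖η‖) / (‖η‖ ^ 2 * ‖ξ - η‖ ^ 2) := by
        gcongr
        exact abs_inner_perp_mul_inner_le ξ η 2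
    _ = 1 / 2 * ‖ξ - (2 : ℝ) • η‖ ^ 2 * ‖ξ‖ * ‖η‖ / (‖η‖ ^ 2 * ‖ξ - η‖ ^ 2) := by ring
    _ = 1 / 2 * ‖ξ - (2 : ℝ) • η‖ ^ 2 * ‖ξ‖ / (‖η‖ * ‖ξ - η‖ ^ 2) := mul_div_sq_mul _ _ _

theorem double_null_form_bound (ξ η : EuclideanSpace ℝ (Fin 2))
    (hη : η ≠ 0) (hξη : ξ - η ≠ 0) :
    |frakm ξ η| ≤ (1 / 2) * ‖ξ - (2 : ℝ) • η‖ ^ 2 * ‖ξ‖ / (‖η‖ * ‖ξ - η‖ ^ 2) :=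
  double_null_form_bound_general ξ η
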